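/- arXiv:1706.08170 — 7 statements merged into one kernel-verified Lean document; each statement's English description precedes it below -/
import Mathlib

section
/- A quasi-measure is continuous from below on open sets: if (U_λ) is an increasingly directed net of open sets with union U, then μ(U_λ) converges increasingly to μ(U). -/
open Set MeasureTheory BoundedContinuousFunction Filter Topology

/-- An *image* is a set that is either open or closed. -/
def IsImage {X : Type*} [TopologicalSpace X] (A : Set X) : Prop := IsOpen A ∨ IsClosed A

/-- A (normalized, additive, compact-regular) quasi-measure on the images of `X`. -/
structure IsQuasiMeasure {X : Type*} [TopologicalSpace X] (μ : Set X → ℝ) : Prop where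
  nonneg : ∀ A : Set X, IsImage A → 0 ≤ μ A
  normalized : μ Set.univ = 1
  additive : ∀ A B : Set X, IsImage A → IsImage B → IsImage (A ∪ B) → Disjoint A B →
    μ (A ∪ B) = μ A + μ B
  regular : ∀ U : Set X, IsOpen U →
    IsLUB {r : ℝ | ∃ K : Set X, IsCompact K ∧ K ⊆ U ∧ μ K = r} (μ U)

/-- A quasi-measure is simple if it only takes the values 0 and 1. -/
def IsSimpleQM {X : Type*} [TopologicalSpace X] (μ : Set X → ℝ) : Prop :=
  ∀ A : Set X, IsImage A → μ A = 0 ∨ μ A = 1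

/-- Membership in the singly generated algebra `A(c) = {φ ∘ c : φ ∈ C(ℝ,ℝ)}`. -/
def InAlg {X : Type*} [TopologicalSpace X] (c f : X →ᵇ ℝ) : Prop :=
  ∃ φ : C(ℝ, ℝ), ∀ x, f x = φ (c x)

-- The quasi-integral of `a` with respect to `μ`: `∫ t dμ_a(t)` where `μ_a`
-- is the Borel probability measure extending `μ ∘ a⁻¹` (if it exists).
open Classical in
noncomputable def qint {X : Type*} [TopologicalSpace X] (μ : Set X → ℝ) (a : X →ᵇ ℝ) : ℝ :=
  if h : ∃ ν : MeasureTheory.Measure ℝ, MeasureTheory.IsProbabilityMeasure ν ∧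
      ∀ A : Set ℝ, IsImage A → ν A = ENNReal.ofReal (μ (a ⁻¹' A))
  then ∫ t, t ∂ h.choose else 0

/-- An image-transformation from `X` to `Y`. -/
structure IsImageTransformation {X Y : Type*} [TopologicalSpace X] [TopologicalSpace Y]
    (q : Set X → Set Y) : Prop where
  image : ∀ A : Set X, IsImage A → IsImage (q A)
  top : q Set.univ = Set.univ
  openMap : ∀ U : Set X, IsOpen U → IsOpen (q U)
  additive : ∀ A B : Set X, IsImage A → IsImage B → IsImage (A ∪ B) → Disjoint A B →
    q (A ∪ B) = q A ∪ q B ∧ Disjoint (q A) (q B)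
  regular : ∀ U : Set X, IsOpen U → ∀ K : Set Y, IsCompact K → K ⊆ q U →
    ∃ L : Set X, IsCompact L ∧ L ⊆ U ∧ K ⊆ q L

namespace IsQuasiMeasure

variable {X : Type*} [TopologicalSpace X] {μ : Set X → ℝ}

lemma le_of_isCompact_subset_isOpen (hμ : IsQuasiMeasure μ) {K U : Set X} (hK : IsCompact K)
    (hU : IsOpen U) (hKU : K ⊆ U) : μ K ≤ μ U :=
  (hμ.regular U hU).1 ⟨K, hK, hKU, rfl⟩

lemma mono_isOpen (hμ : IsQuasiMeasure μ) {V W : Set X} (hV : IsOpen V) (hW : IsOpen W)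
    (hVW : V ⊆ W) : μ V ≤ μ W :=
  (hμ.regular V hV).2 fun _ ⟨_, hK, hKV, hμK⟩ =>
    hμK ▸ hμ.le_of_isCompact_subset_isOpen hK hW (hKV.trans hVW)

/-- A compact subset of the union lies in a single member of the family, so inner regularity
of the union is witnessed by the members. -/
lemma isLUB_iUnion_of_directed (hμ : IsQuasiMeasure μ) {ι : Type*} [Nonempty ι]
    {U : ι → Set X} (hopen : ∀ i, IsOpen (U i)) (hdir : Directed (· ⊆ ·) U) :
    IsLUB (range fun i => μ (U i)) (μ (⋃ i, U i)) := by
  have hUnion : IsOpen (⋃ i, U i) := isOpen_iUnion hopen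
  refine ⟨?_, fun b hb => (hμ.regular _ hUnion).2 ?_⟩
  · rintro _ ⟨i, rfl⟩
    exact hμ.mono_isOpen (hopen i) hUnion (subset_iUnion U i)
  · rintro _ ⟨K, hK, hKU, rfl⟩
    obtain ⟨i, hKi⟩ := hK.elim_directed_cover U hopen hKU hdir
    exact (hμ.le_of_isCompact_subset_isOpen hK (hopen i) hKi).trans (hb ⟨i, rfl⟩)

end IsQuasiMeasure

theorem quasiMeasure_continuous_from_below_general {X : Type*} [TopologicalSpace X]
    {ι : Type*} [Preorder ι] [IsDirected ι (· ≤ ·)] [Nonempty ι]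
    (μ : Set X → ℝ) (hμ : IsQuasiMeasure μ)
    (U : ι → Set X) (hopen : ∀ i, IsOpen (U i)) (hmono : Monotone U) :
    Monotone (fun i => μ (U i)) ∧
      Filter.Tendsto (fun i => μ (U i)) Filter.atTop (nhds (μ (⋃ i, U i))) := by
  have hμmono : Monotone fun i => μ (U i) := fun i j hij =>
    hμ.mono_isOpen (hopen i) (hopen j) (hmono hij)
  exact ⟨hμmono, tendsto_atTop_isLUB hμmono (hμ.isLUB_iUnion_of_directed hopen hmono.directed_le)⟩

/-- continuity from below on open sets along increasingly directed nets. -/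
theorem quasiMeasure_continuous_from_below {X : Type*} [TopologicalSpace X] [T2Space X]
    {ι : Type*} [Preorder ι] [IsDirected ι (· ≤ ·)] [Nonempty ι]
    (μ : Set X → ℝ) (hμ : IsQuasiMeasure μ)
    (U : ι → Set X) (hopen : ∀ i, IsOpen (U i)) (hmono : Monotone U) :
    Monotone (fun i => μ (U i)) ∧
      Filter.Tendsto (fun i => μ (U i)) Filter.atTop (nhds (μ (⋃ i, U i))) :=
  quasiMeasure_continuous_from_below_general μ hμ U hopen hmono
end

section
/- A quasi-measure is continuous from above on closed sets: if (F_λ) is a decreasingly directed net of closed sets with intersection F, then μ(F_λ) converges decreasingly to μ(F). -/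
open Set MeasureTheory BoundedContinuousFunction Filter Topology

namespace IsQuasiMeasure

variable {X : Type*} [TopologicalSpace X] {μ : Set X → ℝ}

lemma add_compl (hμ : IsQuasiMeasure μ) {A : Set X} (hA : IsImage A) (hAc : IsImage Aᶜ) :
    μ A + μ Aᶜ = 1 := by
  have hunion : IsImage (A ∪ Aᶜ) := by
    rw [union_compl_self]
    exact Or.inl isOpen_univ
  rw [← hμ.additive A Aᶜ hA hAc hunion disjoint_compl_right, union_compl_self, hμ.normalized]

lemma compl_of_isClosed (hμ : IsQuasiMeasure μ) {F : Set X} (hF : IsClosed F) :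
    μ Fᶜ = 1 - μ F := by
  linarith [hμ.add_compl (Or.inr hF) (Or.inl hF.isOpen_compl)]

lemma mono_of_isOpen (hμ : IsQuasiMeasure μ) {U V : Set X} (hU : IsOpen U) (hV : IsOpen V)
    (hUV : U ⊆ V) : μ U ≤ μ V := by
  refine (hμ.regular U hU).2 ?_
  rintro r ⟨K, hK, hKU, rfl⟩
  exact (hμ.regular V hV).1 ⟨K, hK, hKU.trans hUV, rfl⟩

lemma mono_of_isClosed (hμ : IsQuasiMeasure μ) {A B : Set X} (hA : IsClosed A)
    (hB : IsClosed B) (hAB : A ⊆ B) : μ A ≤ μ B := by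
  have hcompl := hμ.mono_of_isOpen hB.isOpen_compl hA.isOpen_compl (compl_subset_compl.mpr hAB)
  rw [hμ.compl_of_isClosed hA, hμ.compl_of_isClosed hB] at hcompl
  linarith

/-- Inner regularity of the open set `(⋂ i, F i)ᶜ` gives a compact `K` inside it with
`μ K > 1 - b`; since the union `⋃ i, (F i)ᶜ` is directed, compactness puts `K` inside a single
`(F i)ᶜ`. -/
lemma exists_lt_of_iInter_lt {ι : Type*} [Preorder ι] [IsDirected ι (· ≤ ·)] [Nonempty ι]
    (hμ : IsQuasiMeasure μ) {F : ι → Set X} (hclosed : ∀ i, IsClosed (F i)) (hanti : Antitone F)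
    {b : ℝ} (hb : μ (⋂ i, F i) < b) : ∃ i, μ (F i) < b := by
  have hS : IsClosed (⋂ i, F i) := isClosed_iInter hclosed
  have hlt : 1 - b < μ (⋂ i, F i)ᶜ := by
    rw [hμ.compl_of_isClosed hS]
    linarith
  obtain ⟨_, ⟨K, hK, hKS, rfl⟩, hKb, -⟩ := (hμ.regular _ hS.isOpen_compl).exists_between hlt
  rw [compl_iInter] at hKS
  obtain ⟨i, hKi⟩ := hK.elim_directed_cover (fun i => (F i)ᶜ) (fun i => (hclosed i).isOpen_compl)
    hKS (Monotone.directed_le fun _ _ hij => compl_subset_compl.mpr (hanti hij))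
  refine ⟨i, ?_⟩
  have hKFi := (hμ.regular _ (hclosed i).isOpen_compl).1 ⟨K, hK, hKi, rfl⟩
  rw [hμ.compl_of_isClosed (hclosed i)] at hKFi
  linarith

end IsQuasiMeasure

theorem quasiMeasure_continuous_from_above_general {X : Type*} [TopologicalSpace X]
    {ι : Type*} [Preorder ι] [IsDirected ι (· ≤ ·)] [Nonempty ι]
    (μ : Set X → ℝ) (hμ : IsQuasiMeasure μ)
    (F : ι → Set X) (hclosed : ∀ i, IsClosed (F i)) (hanti : Antitone F) :
    Antitone (fun i => μ (F i)) ∧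
      Filter.Tendsto (fun i => μ (F i)) Filter.atTop (nhds (μ (⋂ i, F i))) := by
  have hmono : Antitone fun i => μ (F i) := fun i j hij =>
    hμ.mono_of_isClosed (hclosed j) (hclosed i) (hanti hij)
  refine ⟨hmono, tendsto_order.2 ⟨fun a ha => Eventually.of_forall fun i => ?_, fun b hb => ?_⟩⟩
  · exact ha.trans_le (hμ.mono_of_isClosed (isClosed_iInter hclosed) (hclosed i) (iInter_subset F i))
  · obtain ⟨i, hi⟩ := hμ.exists_lt_of_iInter_lt hclosed hanti hb
    exact eventually_atTop.2 ⟨i, fun j hij => (hmono hij).trans_lt hi⟩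

/-- continuity from above on closed sets along decreasingly directed nets. -/
theorem quasiMeasure_continuous_from_above {X : Type*} [TopologicalSpace X] [T2Space X]
    {ι : Type*} [Preorder ι] [IsDirected ι (· ≤ ·)] [Nonempty ι]
    (μ : Set X → ℝ) (hμ : IsQuasiMeasure μ)
    (F : ι → Set X) (hclosed : ∀ i, IsClosed (F i)) (hanti : Antitone F) :
    Antitone (fun i => μ (F i)) ∧
      Filter.Tendsto (fun i => μ (F i)) Filter.atTop (nhds (μ (⋂ i, F i))) :=
  quasiMeasure_continuous_from_above_general μ hμ F hclosed hanti
end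

section
/- (Staircase Lemma) Let X be a topological space and a, b ∈ C_b(X,ℝ) with a ≤ b. For each δ > 0 there exist n and decompositions a = a₁ + ⋯ + aₙ, b = b₁ + ⋯ + bₙ with each aᵢ in the closed unital algebra generated by a, each bᵢ in the closed unital algebra generated by b, each aᵢ and bᵢ in the closed unital algebra generated by aᵢ + bᵢ, and aᵢ ≤ bᵢ + δ/n for all i. -/
open Set MeasureTheory BoundedContinuousFunction Filter Topology

/-! Cut the range of `a` and of `b` into steps of height `δ`, the steps of `a` lying
one step above those of `b`. Since `a ≤ b`, wherever the `i`-th step of `a` has started, the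
`i`-th step of `b` is already complete; so the pair of `i`-th steps runs along an L-shaped
monotone path, and each of the two is a continuous function of their sum. -/

def ramp (c h : ℝ) : C(ℝ, ℝ) := ⟨fun t => min (max t c) (c + h) - c, by fun_prop⟩

section ramp

variable {c h t : ℝ}

lemma ramp_apply : ramp c h t = min (max t c) (c + h) - c := rfl

lemma ramp_nonneg (hh : 0 ≤ h) : 0 ≤ ramp c h t := by
  rw [ramp_apply, sub_nonneg]
  exact le_min (le_max_right _ _) (by linarith)

lemma ramp_le : ramp c h t ≤ h := by
  rw [ramp_apply]
  linarith [min_le_right (max t c) (c + h)]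

lemma ramp_of_mem_Icc (ht : t ∈ Icc c (c + h)) : ramp c h t = t - c := by
  rw [ramp_apply, max_eq_left ht.1, min_eq_left ht.2]

lemma ramp_add_ramp {k : ℝ} (hh : 0 ≤ h) (hk : 0 ≤ k) :
    ramp c h t + ramp (c + h) k t = ramp c (h + k) t := by
  simp only [ramp_apply]
  rcases le_total t (c + h) with ht | ht
  · have : max t c ≤ c + h := max_le ht (by linarith)
    have hck : c + h ≤ c + h + k := le_add_of_nonneg_right hk
    rw [max_eq_right ht, min_eq_left hck, min_eq_left this,
      min_eq_left (this.trans (by linarith : c + h ≤ c + (h + k)))]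
    ring
  · rw [max_eq_left ((le_add_of_nonneg_right hh).trans ht), max_eq_left ht, min_eq_right ht,
      add_assoc c h k]
    ring

lemma sum_range_ramp (hh : 0 ≤ h) (n : ℕ) :
    ∑ i ∈ Finset.range n, ramp (c + i * h) h t = ramp c (n * h) t := by
  induction n with
  | zero => simp [ramp_apply]
  | succ n ih =>
    rw [Finset.sum_range_succ, ih, ramp_add_ramp (by positivity) hh, Nat.cast_succ, add_one_mul]

lemma ramp_eq_zero_or_ramp_eq {r s : ℝ} (hh : 0 ≤ h) (hst : s ≤ t) :
    ramp (r + h) h s = 0 ∨ ramp r h t = h := by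
  simp only [ramp_apply]
  rcases le_total s (r + h) with hs | hs
  · left
    rw [max_eq_right hs, min_eq_left (by linarith)]
    ring
  · right
    rw [max_eq_left (by linarith), min_eq_right (hs.trans hst)]
    ring

lemma eq_max_and_eq_min_of_eq_zero_or_eq {A B : ℝ} (hA : A ∈ Icc 0 h) (hB : B ∈ Icc 0 h)
    (hAB : A = 0 ∨ B = h) : A = max (A + B - h) 0 ∧ B = min (A + B) h := by
  obtain ⟨hA0, hAh⟩ := hA
  obtain ⟨hB0, hBh⟩ := hB
  rcases hAB with rfl | rfl
  · exact ⟨(max_eq_right (by linarith)).symm, by rw [zero_add, min_eq_left hBh]⟩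
  · exact ⟨by rw [add_sub_cancel_right, max_eq_left hA0], (min_eq_right (by linarith)).symm⟩

lemma ramp_pair_eq_max_and_eq_min {r s : ℝ} (hh : 0 ≤ h) (hst : s ≤ t) :
    ramp (r + h) h s = max (ramp (r + h) h s + ramp r h t - h) 0 ∧
      ramp r h t = min (ramp (r + h) h s + ramp r h t) h :=
  eq_max_and_eq_min_of_eq_zero_or_eq ⟨ramp_nonneg hh, ramp_le⟩
    ⟨ramp_nonneg hh, ramp_le⟩ (ramp_eq_zero_or_ramp_eq hh hst)

end ramp

namespace BoundedContinuousFunction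

variable {X : Type*} [TopologicalSpace X]

noncomputable def stairPiece (f : X →ᵇ ℝ) (c h p : ℝ) : X →ᵇ ℝ :=
  (f ⊔ const X c) ⊓ const X (c + h) - const X c + const X p

@[simp]
lemma stairPiece_apply (f : X →ᵇ ℝ) (c h p : ℝ) (x : X) :
    stairPiece f c h p x = ramp c h (f x) + p := by
  simp [stairPiece, ramp_apply]

lemma inAlg_stairPiece (f : X →ᵇ ℝ) (c h p : ℝ) : InAlg f (stairPiece f c h p) :=
  ⟨ramp c h + ContinuousMap.const ℝ p, fun x => by simp⟩

lemma sum_stairPiece {f : X →ᵇ ℝ} {c h : ℝ} {n : ℕ} (hn : n ≠ 0) (hh : 0 ≤ h)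
    (hf : ∀ x, f x ∈ Icc c (c + n * h)) : ∑ i : Fin n, stairPiece f (c + i * h) h (c / n) = f := by
  ext x
  rw [coe_sum, Finset.sum_apply,
    Fin.sum_univ_eq_sum_range (fun i => stairPiece f (c + i * h) h (c / n) x)]
  simp only [stairPiece_apply, Finset.sum_add_distrib, sum_range_ramp hh, ramp_of_mem_Icc (hf x),
    Finset.sum_const, Finset.card_range, nsmul_eq_mul]
  field_simp
  ring

section pair

variable {f g : X →ᵇ ℝ} {r h p q : ℝ}

lemma inAlg_add_stairPiece_left (hh : 0 ≤ h) (hfg : ∀ x, f x ≤ g x) :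
    InAlg (stairPiece f (r + h) h p + stairPiece g r h q) (stairPiece f (r + h) h p) :=
  ⟨⟨fun u => max (u - p - q - h) 0 + p, by fun_prop⟩, fun x => by
    rw [ContinuousMap.coe_mk, add_apply, stairPiece_apply, stairPiece_apply]
    conv_lhs => rw [(ramp_pair_eq_max_and_eq_min hh (hfg x)).1]
    ring_nf⟩

lemma inAlg_add_stairPiece_right (hh : 0 ≤ h) (hfg : ∀ x, f x ≤ g x) :
    InAlg (stairPiece f (r + h) h p + stairPiece g r h q) (stairPiece g r h q) :=
  ⟨⟨fun u => min (u - p - q) h + q, by fun_prop⟩, fun x => by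
    rw [ContinuousMap.coe_mk, add_apply, stairPiece_apply, stairPiece_apply]
    conv_lhs => rw [(ramp_pair_eq_max_and_eq_min hh (hfg x)).2]
    ring_nf⟩

lemma stairPiece_le_stairPiece_add (hh : 0 ≤ h) (hfg : ∀ x, f x ≤ g x) :
    stairPiece f (r + h) h p ≤ stairPiece g r h q + const X (p - q) := by
  intro x
  change stairPiece f (r + h) h p x ≤ (stairPiece g r h q + const X (p - q)) x
  have hA := ramp_le (c := r + h) (h := h) (t := f x)
  have hB := ramp_nonneg (c := r) (t := g x) hh
  simp only [add_apply, stairPiece_apply, const_apply]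
  rcases ramp_eq_zero_or_ramp_eq (r := r) hh (hfg x) with hA0 | hBh <;> linarith

end pair

end BoundedContinuousFunction

/-- the Staircase Lemma. -/
theorem staircase_lemma {X : Type*} [TopologicalSpace X] (a b : X →ᵇ ℝ) (hab : a ≤ b)
    (δ : ℝ) (hδ : 0 < δ) :
    ∃ (n : ℕ), 0 < n ∧ ∃ (as bs : Fin n → (X →ᵇ ℝ)),
      a = ∑ i, as i ∧ b = ∑ i, bs i ∧
      ∀ i, InAlg a (as i) ∧ InAlg b (bs i) ∧
        InAlg (as i + bs i) (as i) ∧ InAlg (as i + bs i) (bs i) ∧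
        as i ≤ bs i + BoundedContinuousFunction.const X (δ / n) := by
  obtain ⟨n, hn⟩ := exists_nat_gt ((‖a‖ + ‖b‖) / δ + 1)
  have hn0 : 0 < n := by exact_mod_cast (by positivity : (0 : ℝ) < _ + 1).trans hn
  have hnδ : ‖a‖ + ‖b‖ + δ < n * δ := by
    rw [← lt_sub_iff_add_lt, div_lt_iff₀ hδ] at hn
    nlinarith
  have hab' (x : X) : a x ≤ b x := hab x
  have ha (x : X) : -‖a‖ ≤ a x := neg_le_of_abs_le (a.norm_coe_le_norm x)
  have hb (x : X) : b x ≤ ‖b‖ := le_of_abs_le (b.norm_coe_le_norm x)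
  set c := -‖a‖ - δ with hc
  have hstep (i : Fin n) : c + δ + (i : ℕ) * δ = c + (i : ℕ) * δ + δ := add_right_comm ..
  refine ⟨n, hn0, fun i => stairPiece a (c + δ + (i : ℕ) * δ) δ ((c + δ) / n),
    fun i => stairPiece b (c + (i : ℕ) * δ) δ (c / n), ?_, ?_, fun i => ?_⟩
  · refine (sum_stairPiece hn0.ne' hδ.le fun x => ⟨?_, ?_⟩).symm <;>
      linarith [ha x, hb x, hab' x, hc]
  · refine (sum_stairPiece hn0.ne' hδ.le fun x => ⟨?_, ?_⟩).symm <;>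
      linarith [ha x, hb x, hab' x, hc]
  have hδn : (c + δ) / n - c / n = δ / n := by ring
  simp only [hstep, ← hδn]
  exact ⟨inAlg_stairPiece .., inAlg_stairPiece .., inAlg_add_stairPiece_left hδ.le hab',
    inAlg_add_stairPiece_right hδ.le hab', stairPiece_le_stairPiece_add hδ.le hab'⟩
end

section
/- If ρ : C_b(X) → ℝ is positive (a ≥ 0 implies ρ(a) ≥ 0) and quasi-linear (linear on each singly generated algebra A(a)), then ρ is monotone: a ≤ b implies ρ(a) ≤ ρ(b); and ρ is Lipschitz: |ρ(a) − ρ(b)| ≤ ρ(1_X)·‖a − b‖∞. -/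
open Set MeasureTheory BoundedContinuousFunction Filter Topology

/-!
Positivity makes `ρ` monotone inside each algebra `A(c)`. To compare `a ≤ b`, cut both into
layers `min(f, s + δ) - min(f, s)` of height `δ`; linearity on `A(a)` and on `A(b)` makes `ρ`
telescope over the layers. The layer of `a` at height `s + δ` vanishes wherever the layer of `b`
at height `s` is not full, and this forces both into one singly generated algebra, so the former
is dominated by the latter. Summing gives `ρ a ≤ ρ b + δ ρ(1)`, and `δ → 0` gives monotonicity;
the Lipschitz bound follows from `a ≤ b + ‖a - b‖`.
-/

section InAlg

variable {X : Type*} [TopologicalSpace X]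

lemma inAlg_self (f : X →ᵇ ℝ) : InAlg f f := ⟨ContinuousMap.id ℝ, fun _ => rfl⟩

lemma inAlg_one (f : X →ᵇ ℝ) : InAlg f 1 := ⟨ContinuousMap.const ℝ 1, fun _ => rfl⟩

lemma inAlg_inf_const (f : X →ᵇ ℝ) (s : ℝ) : InAlg f (f ⊓ const X s) :=
  ⟨⟨fun t => min t s, by fun_prop⟩, fun _ => rfl⟩

lemma inAlg_of_eq_zero_of_lt {u v : X →ᵇ ℝ} {M : ℝ} (hu : 0 ≤ u) (hvM : ∀ x, v x ≤ M)
    (huv : ∀ x, v x < M → u x = 0) :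
    InAlg (u + v - const X M) u ∧ InAlg (u + v - const X M) v := by
  refine ⟨⟨⟨fun t => max t 0, by fun_prop⟩, fun x => ?_⟩,
    ⟨⟨fun t => M + min t 0, by fun_prop⟩, fun x => ?_⟩⟩ <;>
  · have : 0 ≤ u x := hu x
    have := hvM x
    have := huv x
    simp only [ContinuousMap.coe_mk, coe_sub, coe_add, Pi.sub_apply, Pi.add_apply, const_apply']
    grind

end InAlg

namespace BoundedContinuousFunction

variable {X : Type*} [TopologicalSpace X]

lemma const_eq_smul_one (t : ℝ) : const X t = t • 1 := by ext; simp

noncomputable def layer (f : X →ᵇ ℝ) (s δ : ℝ) : X →ᵇ ℝ :=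
  f ⊓ const X (s + δ) - f ⊓ const X s

lemma layer_apply (f : X →ᵇ ℝ) (s δ : ℝ) (x : X) :
    layer f s δ x = min (f x) (s + δ) - min (f x) s := rfl

lemma layer_nonneg (f : X →ᵇ ℝ) (s : ℝ) {δ : ℝ} (hδ : 0 ≤ δ) : 0 ≤ layer f s δ := fun x => by
  show 0 ≤ layer f s δ x
  rw [layer_apply]; grind

lemma layer_apply_le (f : X →ᵇ ℝ) (s : ℝ) {δ : ℝ} (hδ : 0 ≤ δ) (x : X) : layer f s δ x ≤ δ := by
  rw [layer_apply]; grind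

lemma layer_apply_eq_zero (f : X →ᵇ ℝ) {s δ : ℝ} (hδ : 0 ≤ δ) {x : X} (hx : f x ≤ s) :
    layer f s δ x = 0 := by
  rw [layer_apply]; grind

lemma lt_of_layer_apply_lt (f : X →ᵇ ℝ) (s δ : ℝ) {x : X} (hx : layer f s δ x < δ) :
    f x < s + δ := by
  rw [layer_apply] at hx; grind

end BoundedContinuousFunction

section QuasiLinear

variable {X : Type*} [TopologicalSpace X]

def IsQuasiLinear (ρ : (X →ᵇ ℝ) → ℝ) : Prop :=
  ∀ a f g : X →ᵇ ℝ, InAlg a f → InAlg a g → ∀ s t : ℝ, ρ (s • f + t • g) = s * ρ f + t * ρ g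

namespace IsQuasiLinear

open Finset

variable {ρ : (X →ᵇ ℝ) → ℝ} (hρ : IsQuasiLinear ρ)
include hρ

lemma map_sub {c f g : X →ᵇ ℝ} (hf : InAlg c f) (hg : InAlg c g) : ρ (f - g) = ρ f - ρ g := by
  have h := hρ c f g hf hg 1 (-1)
  rwa [show (1 : ℝ) • f + (-1 : ℝ) • g = f - g by module, one_mul, neg_one_mul,
    ← sub_eq_add_neg] at h

lemma map_add_const (f : X →ᵇ ℝ) (t : ℝ) : ρ (f + const X t) = ρ f + t * ρ 1 := by
  simpa [const_eq_smul_one] using hρ f f 1 (inAlg_self f) (inAlg_one f) 1 t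

lemma map_const (t : ℝ) : ρ (const X t) = t * ρ 1 := by
  simpa [const_eq_smul_one] using hρ 1 1 1 (inAlg_self 1) (inAlg_self 1) t 0

lemma map_inf_const_sub_eq_sum_layer (f : X →ᵇ ℝ) (s δ : ℝ) (N : ℕ) :
    ρ (f ⊓ const X (s + N * δ)) - ρ (f ⊓ const X s) =
      ∑ k ∈ range N, ρ (layer f (s + k * δ) δ) := by
  have hstep (k : ℕ) : s + ((k + 1 : ℕ) : ℝ) * δ = s + k * δ + δ := by push_cast; ring
  have htele := sum_range_sub (fun k : ℕ => ρ (f ⊓ const X (s + k * δ))) N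
  rw [Nat.cast_zero, zero_mul, add_zero] at htele
  rw [← htele]
  refine sum_congr rfl fun k _ => ?_
  rw [layer, hρ.map_sub (inAlg_inf_const f _) (inAlg_inf_const f _), hstep]

variable (hpos : ∀ f : X →ᵇ ℝ, 0 ≤ f → 0 ≤ ρ f)
include hpos

lemma map_le_map_of_inAlg {c f g : X →ᵇ ℝ} (hf : InAlg c f) (hg : InAlg c g) (hfg : f ≤ g) :
    ρ f ≤ ρ g := by
  have := hpos (g - f) (sub_nonneg.2 hfg)
  rw [hρ.map_sub hg hf] at this
  linarith

lemma map_le_map_of_eq_zero_of_lt {u v : X →ᵇ ℝ} {M : ℝ} (hu : 0 ≤ u) (huM : ∀ x, u x ≤ M)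
    (hv : 0 ≤ v) (hvM : ∀ x, v x ≤ M) (huv : ∀ x, v x < M → u x = 0) : ρ u ≤ ρ v := by
  obtain ⟨hcu, hcv⟩ := inAlg_of_eq_zero_of_lt hu hvM huv
  refine hρ.map_le_map_of_inAlg hpos hcu hcv fun x => ?_
  show u x ≤ v x
  rcases (hvM x).lt_or_eq with hlt | heq
  · rw [huv x hlt]; exact hv x
  · rw [heq]; exact huM x

lemma map_layer_le_map_layer {a b : X →ᵇ ℝ} (hab : a ≤ b) (s : ℝ) {δ : ℝ} (hδ : 0 ≤ δ) :
    ρ (layer a (s + δ) δ) ≤ ρ (layer b s δ) :=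
  hρ.map_le_map_of_eq_zero_of_lt hpos (layer_nonneg a _ hδ) (layer_apply_le a _ hδ)
    (layer_nonneg b s hδ) (layer_apply_le b s hδ)
    fun x hx => layer_apply_eq_zero a hδ ((hab x).trans (lt_of_layer_apply_lt b s δ hx).le)

lemma map_le_map_add_of_le {a b : X →ᵇ ℝ} (hab : a ≤ b) {δ : ℝ} (hδ : 0 < δ) :
    ρ a ≤ ρ b + δ * ρ 1 := by
  set s := -‖a‖ - δ
  obtain ⟨N, hN⟩ := exists_nat_ge (2 * ‖a‖ / δ)
  have hNδ : 2 * ‖a‖ ≤ N * δ := (div_le_iff₀ hδ).1 hN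
  have ha_top : a ⊓ const X (s + δ + N * δ) = a := inf_eq_left.2 fun x => by
    show a x ≤ s + δ + N * δ
    linarith [a.apply_le_norm x]
  have ha_bot : a ⊓ const X (s + δ) = const X (s + δ) := inf_eq_right.2 fun x => by
    show s + δ ≤ a x
    linarith [a.neg_norm_le_apply x]
  have hb_bot : b ⊓ const X s = const X s := inf_eq_right.2 fun x => by
    show s ≤ b x
    have : a x ≤ b x := hab x
    linarith [a.neg_norm_le_apply x]
  have hb_top : ρ (b ⊓ const X (s + N * δ)) ≤ ρ b :=
    hρ.map_le_map_of_inAlg hpos (inAlg_inf_const b _) (inAlg_self b) inf_le_left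
  have hlayers : ∑ k ∈ range N, ρ (layer a (s + δ + k * δ) δ) ≤
      ∑ k ∈ range N, ρ (layer b (s + k * δ) δ) := sum_le_sum fun k _ => by
    rw [add_right_comm]
    exact hρ.map_layer_le_map_layer hpos hab _ hδ.le
  rw [← hρ.map_inf_const_sub_eq_sum_layer, ← hρ.map_inf_const_sub_eq_sum_layer, ha_top,
    ha_bot, hb_bot, hρ.map_const, hρ.map_const] at hlayers
  linarith

theorem monotone : Monotone ρ := fun a b hab => by
  have hlim : Tendsto (fun δ : ℝ => ρ b + δ * ρ 1) (𝓝[>] 0) (𝓝 (ρ b)) := by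
    have : Continuous fun δ : ℝ => ρ b + δ * ρ 1 := by fun_prop
    simpa using (this.tendsto 0).mono_left nhdsWithin_le_nhds
  exact ge_of_tendsto hlim (eventually_nhdsWithin_of_forall fun δ hδ =>
    hρ.map_le_map_add_of_le hpos hab hδ)

lemma map_sub_map_le (a b : X →ᵇ ℝ) : ρ a - ρ b ≤ ρ 1 * ‖a - b‖ := by
  have hle : a ≤ b + const X ‖a - b‖ := fun x => by
    show a x ≤ b x + ‖a - b‖
    linarith [(a - b).apply_le_norm x, sub_apply a b (x := x)]
  have := hρ.monotone hpos hle
  rw [hρ.map_add_const] at this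
  linarith

end IsQuasiLinear

end QuasiLinear

/-- a positive quasi-linear functional is monotone and Lipschitz. -/
theorem quasiLinear_monotone_lipschitz {X : Type*} [TopologicalSpace X]
    (ρ : (X →ᵇ ℝ) → ℝ)
    (hpos : ∀ a : X →ᵇ ℝ, 0 ≤ a → 0 ≤ ρ a)
    (hql : ∀ a f g : X →ᵇ ℝ, InAlg a f → InAlg a g → ∀ s t : ℝ,
      ρ (s • f + t • g) = s * ρ f + t * ρ g) :
    (∀ a b : X →ᵇ ℝ, a ≤ b → ρ a ≤ ρ b) ∧
      ∀ a b : X →ᵇ ℝ, |ρ a - ρ b| ≤ ρ 1 * ‖a - b‖ := by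
  have hρ : IsQuasiLinear ρ := hql
  refine ⟨fun a b hab => hρ.monotone hpos hab, fun a b => abs_sub_le_iff.2 ⟨?_, ?_⟩⟩
  · exact hρ.map_sub_map_le hpos a b
  · simpa only [norm_sub_rev] using hρ.map_sub_map_le hpos b a
end

section
/- If σ is a simple quasi-measure on a Hausdorff space X (σ takes only the values 0 and 1) and a ∈ C_b(X), then the induced Borel measure σ_a on ℝ is the Dirac measure δ_{σ(a)} concentrated at the quasi-integral σ(a), and consequently σ(φ ∘ a) = φ(σ(a)) for every continuous φ : ℝ → ℝ; in particular the quasi-integral of a simple quasi-measure is multiplicative on each singly generated algebra A(a). -/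
open Set MeasureTheory BoundedContinuousFunction Filter Topology

/-!
The sets of measure `0` or `1` under a probability measure form a Dynkin system, so a
probability measure taking only these values on the closed sets takes only these values on
all Borel sets, and on `ℝ` such a measure is a Dirac measure `δ_c`, with `c = ∫ t dδ_c`.
For `b = φ ∘ a` the measure `σ_b` agrees with the pushforward of `σ_a` under `φ` on closed
sets, hence `σ_b = φ_* δ_c = δ_{φ c}`.
-/

namespace MeasureTheory

theorem isZeroOneMeasure_of_isPiSystem {α : Type*} [mα : MeasurableSpace α]
    {μ : Measure α} [IsProbabilityMeasure μ] {C : Set (Set α)}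
    (hgen : mα = MeasurableSpace.generateFrom C) (hC : IsPiSystem C)
    (h01 : ∀ s ∈ C, μ s = 0 ∨ μ s = 1) : IsZeroOneMeasure μ := by
  refine ⟨fun s hs => MeasurableSpace.induction_on_inter (C := fun s _ => μ s = 0 ∨ μ s = 1)
    hgen hC (by simp) h01 ?_ ?_ s hs⟩
  · intro t ht ht01
    rw [prob_compl_eq_one_sub ht]
    rcases ht01 with h | h <;> simp [h]
  · intro f _ _ hf01
    by_cases hone : ∃ i, μ (f i) = 1
    · obtain ⟨i, hi⟩ := hone
      exact Or.inr <| le_antisymm prob_le_one (hi ▸ measure_mono (subset_iUnion f i))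
    · simp only [not_exists] at hone
      exact Or.inl <| measure_iUnion_null fun i => (hf01 i).resolve_right (hone i)

theorem isZeroOneMeasure_of_isClosed {α : Type*} [TopologicalSpace α] [MeasurableSpace α]
    [BorelSpace α] {μ : Measure α} [IsProbabilityMeasure μ]
    (h01 : ∀ s, IsClosed s → μ s = 0 ∨ μ s = 1) : IsZeroOneMeasure μ :=
  isZeroOneMeasure_of_isPiSystem (BorelSpace.measurable_eq.trans borel_eq_generateFrom_isClosed)
    isPiSystem_isClosed h01

end MeasureTheory

theorem isZeroOneMeasure_of_isSimpleQM {X : Type*} [TopologicalSpace X] {σ : Set X → ℝ}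
    (hσ : IsSimpleQM σ) {a : X → ℝ} (ha : Continuous a) {ν : Measure ℝ}
    [IsProbabilityMeasure ν] (hν : ∀ A : Set ℝ, IsImage A → ν A = ENNReal.ofReal (σ (a ⁻¹' A))) :
    IsZeroOneMeasure ν := by
  refine isZeroOneMeasure_of_isClosed fun s hs => ?_
  rw [hν s (Or.inr hs)]
  rcases hσ _ (Or.inr (hs.preimage ha)) with h | h <;> simp [h]

theorem eq_map_of_forall_eq_comp {X : Type*} {σ : Set X → ℝ} {a b : X → ℝ} {φ : C(ℝ, ℝ)}
    (hb : ∀ x, b x = φ (a x)) {νa νb : Measure ℝ} [IsProbabilityMeasure νa]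
    [IsProbabilityMeasure νb]
    (hνa : ∀ A : Set ℝ, IsImage A → νa A = ENNReal.ofReal (σ (a ⁻¹' A)))
    (hνb : ∀ A : Set ℝ, IsImage A → νb A = ENNReal.ofReal (σ (b ⁻¹' A))) :
    νb = νa.map φ := by
  have : IsProbabilityMeasure (νa.map φ) :=
    Measure.isProbabilityMeasure_map φ.continuous.measurable.aemeasurable
  refine ext_of_generate_finite _ borel_eq_generateFrom_isClosed isPiSystem_isClosed
    (fun A hA => ?_) (by simp)
  have hpre : b ⁻¹' A = a ⁻¹' (φ ⁻¹' A) := by ext x; simp [hb x]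
  rw [Measure.map_apply φ.continuous.measurable hA.measurableSet, hνb A (Or.inr hA), hpre,
    hνa _ (Or.inr (hA.preimage φ.continuous))]

theorem simple_quasiMeasure_dirac_general {X : Type*} [TopologicalSpace X]
    (σ : Set X → ℝ) (hsimple : IsSimpleQM σ)
    (a : X →ᵇ ℝ) (νa : MeasureTheory.Measure ℝ)
    (hνa : MeasureTheory.IsProbabilityMeasure νa)
    (ha : ∀ A : Set ℝ, IsImage A → νa A = ENNReal.ofReal (σ (a ⁻¹' A))) :
    νa = MeasureTheory.Measure.dirac (∫ t, t ∂νa) ∧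
      ∀ (φ : C(ℝ, ℝ)) (b : X →ᵇ ℝ), (∀ x, b x = φ (a x)) →
        ∀ νb : MeasureTheory.Measure ℝ, MeasureTheory.IsProbabilityMeasure νb →
          (∀ A : Set ℝ, IsImage A → νb A = ENNReal.ofReal (σ (b ⁻¹' A))) →
          ∫ t, t ∂νb = φ (∫ t, t ∂νa) := by
  have : IsZeroOneMeasure νa := isZeroOneMeasure_of_isSimpleQM hsimple a.continuous ha
  obtain ⟨c, rfl⟩ := IsZeroOneMeasure.exists_eq_dirac (μ := νa)
  rw [integral_dirac]
  refine ⟨rfl, fun φ b hb νb _ hνb => ?_⟩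
  rw [eq_map_of_forall_eq_comp hb ha hνb, Measure.map_dirac' φ.continuous.measurable,
    integral_dirac]

/-- for a simple quasi-measure, `σ_a` is the Dirac measure at `σ(a)` and
`σ(φ ∘ a) = φ(σ(a))`; in particular the quasi-integral is multiplicative on `A(a)`. -/
theorem simple_quasiMeasure_dirac {X : Type*} [TopologicalSpace X] [T2Space X]
    (σ : Set X → ℝ) (hσ : IsQuasiMeasure σ) (hsimple : IsSimpleQM σ)
    (a : X →ᵇ ℝ) (νa : MeasureTheory.Measure ℝ)
    (hνa : MeasureTheory.IsProbabilityMeasure νa)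
    (ha : ∀ A : Set ℝ, IsImage A → νa A = ENNReal.ofReal (σ (a ⁻¹' A))) :
    νa = MeasureTheory.Measure.dirac (∫ t, t ∂νa) ∧
      ∀ (φ : C(ℝ, ℝ)) (b : X →ᵇ ℝ), (∀ x, b x = φ (a x)) →
        ∀ νb : MeasureTheory.Measure ℝ, MeasureTheory.IsProbabilityMeasure νb →
          (∀ A : Set ℝ, IsImage A → νb A = ENNReal.ofReal (σ (b ⁻¹' A))) →
          ∫ t, t ∂νb = φ (∫ t, t ∂νa) :=
  simple_quasiMeasure_dirac_general σ hsimple a νa hνa ha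
end

section
/- Monotone convergence for quasi-integrals: if μ is a quasi-measure on a Hausdorff space X and (a_λ) is an increasing net in C_b(X) converging pointwise up to a ∈ C_b(X), then the quasi-integrals μ(a_λ) converge increasingly to μ(a). -/
open Set MeasureTheory BoundedContinuousFunction Filter Topology

/-!
For `‖a‖ ≤ M` the quasi-integral is given by the layer-cake formula
`μ(a) = ∫_{-M}^{M} μ{a > u} du - M`. This needs the measure `μ_a`: it is the Lebesgue–Stieltjes
measure of `t ↦ μ{a ≤ t}`, and it agrees with `μ ∘ a⁻¹` on open sets because both are inner
regular and agree on finite disjoint unions of open intervals.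

Along the net, the open sets `{a_λ > u}` increase to `{f > u}`, so compact regularity gives
`μ{a_λ > u} → μ{f > u}` for every `u`. These are antitone functions of `u` on a fixed interval,
and for antitone functions pointwise convergence along any filter already implies convergence
of the integrals: upper and lower Riemann sums on a fixed grid differ by `O(1/n)`.
-/

theorem IsCompact.inter_connectedComponentIn {α : Type*} [TopologicalSpace α]
    [LocallyConnectedSpace α] {K U : Set α} (hK : IsCompact K) (hU : IsOpen U) (hKU : K ⊆ U)
    (x : α) : IsCompact (K ∩ connectedComponentIn U x) := by
  suffices K ∩ closure (connectedComponentIn U x) ⊆ connectedComponentIn U x by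
    rw [show K ∩ connectedComponentIn U x = K ∩ closure (connectedComponentIn U x) from
      Subset.antisymm (inter_subset_inter_right K subset_closure)
        (subset_inter inter_subset_left this)]
    exact hK.inter_right isClosed_closure
  rintro y ⟨hyK, hy⟩
  obtain ⟨z, hzy, hzx⟩ := mem_closure_iff.1 hy _ hU.connectedComponentIn
    (mem_connectedComponentIn (hKU hyK))
  rw [connectedComponentIn_eq hzx, ← connectedComponentIn_eq hzy]
  exact mem_connectedComponentIn (hKU hyK)

theorem IsCompact.exists_Ioo_between_of_ordConnected {K U : Set ℝ} (hK : IsCompact K)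
    (hU : IsOpen U) (hU' : U.OrdConnected) (hKU : K ⊆ U) :
    ∃ p q, K ⊆ Ioo p q ∧ Ioo p q ⊆ U := by
  rcases K.eq_empty_or_nonempty with rfl | hne
  · exact ⟨0, 0, empty_subset _, by simp⟩
  obtain ⟨p, hp, hpU⟩ := Filter.Eventually.exists_lt (hU.mem_nhds (hKU (hK.sInf_mem hne)))
  obtain ⟨q, hq, hqU⟩ := Filter.Eventually.exists_gt (hU.mem_nhds (hKU (hK.sSup_mem hne)))
  refine ⟨p, q, fun x hx => ⟨hp.trans_le (csInf_le hK.bddBelow hx),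
    (le_csSup hK.bddAbove hx).trans_lt hq⟩, Ioo_subset_Icc_self.trans (hU'.out hpU hqU)⟩

theorem IsCompact.exists_finset_Ioo_between {K U : Set ℝ} (hK : IsCompact K) (hU : IsOpen U)
    (hKU : K ⊆ U) : ∃ S : Finset (Set ℝ), (∀ V ∈ S, ∃ p q, V = Ioo p q) ∧
      (S : Set (Set ℝ)).PairwiseDisjoint id ∧ K ⊆ ⋃₀ S ∧ ⋃₀ S ⊆ U := by
  classical
  have hcomp : ∀ c ∈ range (connectedComponentIn U), ∃ p q,
      K ∩ c ⊆ Ioo p q ∧ Ioo p q ⊆ c := by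
    rintro _ ⟨x, rfl⟩
    exact (hK.inter_connectedComponentIn hU hKU x).exists_Ioo_between_of_ordConnected
      hU.connectedComponentIn isPreconnected_connectedComponentIn.ordConnected
      inter_subset_right
  -- Choosing one interval per component, rather than per point, makes them pairwise disjoint.
  choose! p q hpq using hcomp
  obtain ⟨b, -, hb, hKb⟩ := hK.elim_finite_subcover_image
    (fun x (_ : x ∈ K) => (hU.connectedComponentIn : IsOpen (connectedComponentIn U x)))
    fun x hx => mem_biUnion hx (mem_connectedComponentIn (hKU hx))
  let I : ℝ → Set ℝ := fun x => Ioo (p (connectedComponentIn U x)) (q (connectedComponentIn U x))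
  have hI : ∀ x, I x ⊆ connectedComponentIn U x := fun x => (hpq _ (mem_range_self x)).2
  refine ⟨hb.toFinset.image I, ?_, ?_, ?_, ?_⟩
  · simp only [Finset.mem_image]
    rintro _ ⟨x, -, rfl⟩
    exact ⟨_, _, rfl⟩
  · simp only [Finset.coe_image]
    rintro _ ⟨x, -, rfl⟩ _ ⟨y, -, rfl⟩ hxy
    refine disjoint_left.2 fun z hzx hzy => hxy ?_
    simp only [I, connectedComponentIn_eq (hI x hzx), connectedComponentIn_eq (hI y hzy)]
  · intro z hz
    obtain ⟨x, hx, hzx⟩ := mem_iUnion₂.1 (hKb hz)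
    exact mem_sUnion_of_mem ((hpq _ (mem_range_self x)).1 ⟨hz, hzx⟩)
      (Finset.mem_image_of_mem I (hb.mem_toFinset.2 hx))
  · simp only [Finset.coe_image, sUnion_image]
    exact iUnion₂_subset fun x _ => (hI x).trans (connectedComponentIn_subset U x)

theorem integral_id_eq_intervalIntegral_measureReal_Ioi {ν : Measure ℝ} [IsProbabilityMeasure ν]
    {M : ℝ} (hν : ∀ᵐ t ∂ν, t ∈ Icc (-M) M) :
    ∫ t, t ∂ν = (∫ u in -M..M, ν.real (Ioi u)) - M := by
  have hM : 0 ≤ M := by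
    obtain ⟨t, ht⟩ := hν.exists
    linarith [ht.1, ht.2]
  have hid : Integrable (fun t : ℝ => t) ν := Integrable.of_bound
    measurable_id.aestronglyMeasurable M (by
      filter_upwards [hν] with t ht
      exact abs_le.2 ht)
  have hint : Integrable (fun t : ℝ => t + M) ν := hid.add (integrable_const M)
  have hnn : 0 ≤ᵐ[ν] fun t => t + M := by
    filter_upwards [hν] with t ht
    exact neg_le_iff_add_nonneg.1 ht.1
  have hnull : ∀ s ∈ Ioi 0 \ Ioc 0 (2 * M), ν.real {t | s < t + M} = 0 := by
    intro s hs
    have hs' : 2 * M < s := not_le.1 fun h => hs.2 ⟨hs.1, h⟩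
    refine (measureReal_eq_zero_iff (measure_ne_top _ _)).2 (measure_mono_null ?_ (ae_iff.1 hν))
    intro t (ht : s < t + M) h
    linarith [h.2]
  calc ∫ t, t ∂ν = ∫ t, (t + M) ∂ν - M := by
        rw [integral_add hid (integrable_const M), integral_const, probReal_univ, one_smul,
          add_sub_cancel_right]
    _ = (∫ s in 0..2 * M, ν.real {t | s < t + M}) - M := by
        rw [hint.integral_eq_integral_meas_lt hnn,
          intervalIntegral.integral_of_le (by linarith),
          setIntegral_eq_of_subset_of_forall_sdiff_eq_zero measurableSet_Ioi
            Ioc_subset_Ioi_self hnull]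
    _ = (∫ u in -M..M, ν.real (Ioi u)) - M := by
        have hset : ∀ s, {t | s < t + M} = Ioi (s - M) := fun s => by
          ext t
          simp [sub_lt_iff_lt_add]
        simp_rw [hset]
        rw [intervalIntegral.integral_comp_sub_right (fun u => ν.real (Ioi u)), zero_sub,
          two_mul, add_sub_cancel_right]

/-- Upper Riemann sum of `φ` minus lower Riemann sum of `ψ` on the grid `a + k (b - a) / n`,
telescoped so that only left endpoints occur. -/
theorem AntitoneOn.intervalIntegral_sub_le {φ ψ : ℝ → ℝ} {a b : ℝ} (hab : a ≤ b)
    (hφ : AntitoneOn φ (Icc a b)) (hψ : AntitoneOn ψ (Icc a b)) {n : ℕ} (hn : n ≠ 0) :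
    (∫ s in a..b, φ s) - ∫ s in a..b, ψ s ≤ (b - a) / n *
      (∑ k ∈ Finset.range n, (φ (a + (b - a) / n * k) - ψ (a + (b - a) / n * k)) + ψ a - ψ b) := by
  set η := (b - a) / n
  have hη : 0 ≤ η := div_nonneg (sub_nonneg.2 hab) n.cast_nonneg
  have hηn : a + η * n = b := by
    simp only [η]
    field_simp
    ring
  have hrescale : ∀ χ : ℝ → ℝ, AntitoneOn χ (Icc a b) →
      AntitoneOn (fun t => χ (a + η * t)) (Icc 0 (0 + n)) ∧
        ∫ s in a..b, χ s = η * ∫ t in 0..0 + (n : ℝ), χ (a + η * t) := by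
    intro χ hχ
    refine ⟨fun s hs t ht hst => hχ ?_ ?_ (by gcongr), ?_⟩
    · exact ⟨le_add_of_nonneg_right (mul_nonneg hη hs.1), by nlinarith [hs.2]⟩
    · exact ⟨le_add_of_nonneg_right (mul_nonneg hη ht.1), by nlinarith [ht.2]⟩
    · rw [zero_add, ← smul_eq_mul, intervalIntegral.smul_integral_comp_add_mul, mul_zero,
        add_zero, hηn]
  obtain ⟨hφ', hφeq⟩ := hrescale φ hφ
  obtain ⟨hψ', hψeq⟩ := hrescale ψ hψ
  have hupper := hφ'.integral_le_sum
  have hlower := hψ'.sum_le_integral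
  have htele := Finset.sum_range_sub' (fun k : ℕ => ψ (a + η * k)) n
  simp only [zero_add, Nat.cast_zero, mul_zero, add_zero, hηn] at hupper hlower htele hφeq hψeq
  rw [hφeq, hψeq, ← mul_sub, Finset.sum_sub_distrib]
  rw [Finset.sum_sub_distrib] at htele
  exact mul_le_mul_of_nonneg_left (by linarith) hη

theorem tendsto_intervalIntegral_of_antitoneOn {ι : Type*} {l : Filter ι} {F : ι → ℝ → ℝ}
    {g : ℝ → ℝ} {a b : ℝ} (hab : a ≤ b) (hF : ∀ i, AntitoneOn (F i) (Icc a b))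
    (hg : AntitoneOn g (Icc a b)) (hlim : ∀ s ∈ Icc a b, Tendsto (fun i => F i s) l (𝓝 (g s))) :
    Tendsto (fun i => ∫ s in a..b, F i s) l (𝓝 (∫ s in a..b, g s)) := by
  refine Metric.tendsto_nhds.2 fun ε hε => ?_
  obtain ⟨n, hnε, hn⟩ : ∃ n : ℕ, (b - a) / n * (g a - g b) < ε ∧ n ≠ 0 := by
    simp_rw [div_mul_eq_mul_div]
    exact (((tendsto_const_div_atTop_nhds_zero_nat _).eventually (gt_mem_nhds hε)).and
      (eventually_ne_atTop 0)).exists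
  set η := (b - a) / n with hη_def
  have hη : 0 ≤ η := div_nonneg (sub_nonneg.2 hab) n.cast_nonneg
  have hx : ∀ k ∈ Finset.range n, a + η * k ∈ Icc a b := fun k hk => by
    refine ⟨le_add_of_nonneg_right (mul_nonneg hη k.cast_nonneg), ?_⟩
    have hkn : (k : ℝ) ≤ n := by exact_mod_cast (Finset.mem_range.1 hk).le
    calc a + η * k ≤ a + η * n := by gcongr
      _ = b := by simp only [η]; field_simp; ring
  have hdist : ∀ s ∈ Icc a b, Tendsto (fun i => |F i s - g s|) l (𝓝 0) := fun s hs => by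
    simpa using ((hlim s hs).sub_const (g s)).abs
  set E : ι → ℝ := fun i => η * (∑ k ∈ Finset.range n, |F i (a + η * k) - g (a + η * k)| +
    |F i a - g a| + |F i b - g b| + (g a - g b))
  have hE : Tendsto E l (𝓝 (η * (g a - g b))) := by
    simpa using ((((tendsto_finsetSum _ fun k hk => hdist _ (hx k hk)).add
      (hdist a ⟨le_rfl, hab⟩)).add (hdist b ⟨hab, le_rfl⟩)).add_const (g a - g b)).const_mul η
  filter_upwards [hE.eventually (gt_mem_nhds hnε)] with i hi
  have hup := (hF i).intervalIntegral_sub_le hab hg hn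
  have hdown := hg.intervalIntegral_sub_le hab (hF i) hn
  rw [← hη_def] at hup hdown
  have hsum₁ : ∑ k ∈ Finset.range n, (F i (a + η * k) - g (a + η * k)) ≤
      ∑ k ∈ Finset.range n, |F i (a + η * k) - g (a + η * k)| :=
    Finset.sum_le_sum fun k _ => le_abs_self _
  have hsum₂ : ∑ k ∈ Finset.range n, (g (a + η * k) - F i (a + η * k)) ≤
      ∑ k ∈ Finset.range n, |F i (a + η * k) - g (a + η * k)| :=
    Finset.sum_le_sum fun k _ => by rw [abs_sub_comm]; exact le_abs_self _
  have hFab : F i a - F i b ≤ |F i a - g a| + |F i b - g b| + (g a - g b) := by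
    linarith [le_abs_self (F i a - g a), neg_le_abs (F i b - g b)]
  rw [Real.dist_eq, abs_sub_lt_iff]
  constructor
  · refine hup.trans_lt (lt_of_le_of_lt (mul_le_mul_of_nonneg_left ?_ hη) hi)
    linarith [abs_nonneg (F i a - g a), abs_nonneg (F i b - g b)]
  · refine hdown.trans_lt (lt_of_le_of_lt (mul_le_mul_of_nonneg_left ?_ hη) hi)
    linarith

theorem IsImage.compl {X : Type*} [TopologicalSpace X] {A : Set X} (h : IsImage A) :
    IsImage Aᶜ :=
  h.elim (fun h => Or.inr h.isClosed_compl) (fun h => Or.inl h.isOpen_compl)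

namespace BoundedContinuousFunction

variable {X : Type*} [TopologicalSpace X]

theorem preimage_Iic_eq_empty (a : X →ᵇ ℝ) {t : ℝ} (ht : t < -‖a‖) : a ⁻¹' Iic t = ∅ :=
  eq_empty_of_forall_notMem fun x hx => (ht.trans_le (a.neg_norm_le_apply x)).not_ge hx

theorem preimage_Iic_eq_univ (a : X →ᵇ ℝ) {t : ℝ} (ht : ‖a‖ ≤ t) : a ⁻¹' Iic t = univ :=
  eq_univ_of_forall fun x => (a.apply_le_norm x).trans ht

end BoundedContinuousFunction

namespace IsQuasiMeasure

variable {X : Type*} [TopologicalSpace X] {μ : Set X → ℝ}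

theorem apply_empty (hμ : IsQuasiMeasure μ) : μ ∅ = 0 := by
  have h := hμ.additive ∅ ∅ (Or.inl isOpen_empty) (Or.inl isOpen_empty)
    (Or.inl (isOpen_empty.union isOpen_empty)) (disjoint_empty _)
  rw [empty_union] at h
  linarith

theorem apply_add_apply_compl (hμ : IsQuasiMeasure μ) {A : Set X} (hA : IsImage A) :
    μ A + μ Aᶜ = 1 := by
  rw [← hμ.normalized, ← union_compl_self A, hμ.additive A Aᶜ hA hA.compl
    (by rw [union_compl_self]; exact Or.inl isOpen_univ) disjoint_compl_right]

theorem apply_mono_of_isOpen (hμ : IsQuasiMeasure μ) {U V : Set X} (hU : IsOpen U)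
    (hV : IsOpen V) (h : U ⊆ V) : μ U ≤ μ V := by
  refine (hμ.regular U hU).2 ?_
  rintro _ ⟨K, hK, hKU, rfl⟩
  exact (hμ.regular V hV).1 ⟨K, hK, hKU.trans h, rfl⟩

theorem apply_mono_of_isClosed_of_isOpen (hμ : IsQuasiMeasure μ) {C U : Set X}
    (hC : IsClosed C) (hU : IsOpen U) (h : C ⊆ U) : μ C ≤ μ U := by
  have hadd := hμ.additive C (U \ C) (Or.inr hC) (Or.inl (hU.sdiff hC))
    (by rw [union_sdiff_cancel h]; exact Or.inl hU) disjoint_sdiff_right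
  rw [union_sdiff_cancel h] at hadd
  linarith [hμ.nonneg (U \ C) (Or.inl (hU.sdiff hC))]

theorem apply_mono_of_isClosed (hμ : IsQuasiMeasure μ) {C D : Set X} (hC : IsClosed C)
    (hD : IsClosed D) (h : C ⊆ D) : μ C ≤ μ D := by
  linarith [hμ.apply_add_apply_compl (Or.inr hC), hμ.apply_add_apply_compl (Or.inr hD),
    hμ.apply_mono_of_isOpen hD.isOpen_compl hC.isOpen_compl (compl_subset_compl.2 h)]

theorem apply_biUnion_finset (hμ : IsQuasiMeasure μ) {κ : Type*} {s : Finset κ}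
    {V : κ → Set X} (hd : (s : Set κ).PairwiseDisjoint V) (hV : ∀ i ∈ s, IsOpen (V i)) :
    μ (⋃ i ∈ s, V i) = ∑ i ∈ s, μ (V i) := by
  classical
  induction s using Finset.induction_on with
  | empty => simpa using hμ.apply_empty
  | insert x t hx ih =>
    rw [Finset.coe_insert] at hd
    have hVx : IsOpen (V x) := hV x (Finset.mem_insert_self x t)
    have hVt : IsOpen (⋃ i ∈ t, V i) :=
      isOpen_biUnion fun i hi => hV i (Finset.mem_insert_of_mem hi)
    have hdisj : Disjoint (V x) (⋃ i ∈ t, V i) :=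
      disjoint_iUnion₂_right.2 fun i hi =>
        hd (mem_insert x _) (mem_insert_of_mem x hi) fun h => hx (h ▸ hi)
    rw [Finset.set_biUnion_insert, hμ.additive _ _ (Or.inl hVx) (Or.inl hVt)
      (Or.inl (hVx.union hVt)) hdisj, Finset.sum_insert hx,
      ih (hd.subset (subset_insert x _)) fun i hi => hV i (Finset.mem_insert_of_mem hi)]

theorem apply_preimage_Iic_add_apply_preimage_Ioi (hμ : IsQuasiMeasure μ) {a : X → ℝ}
    (ha : Continuous a) (t : ℝ) : μ (a ⁻¹' Iic t) + μ (a ⁻¹' Ioi t) = 1 := by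
  rw [← compl_Iic, preimage_compl]
  exact hμ.apply_add_apply_compl (Or.inr (isClosed_Iic.preimage ha))

theorem apply_preimage_Iio_eq_add (hμ : IsQuasiMeasure μ) {a : X → ℝ} (ha : Continuous a)
    {s t : ℝ} (hst : s < t) :
    μ (a ⁻¹' Iio t) = μ (a ⁻¹' Iic s) + μ (a ⁻¹' Ioo s t) := by
  have hd : Disjoint (Iic s) (Ioo s t) := disjoint_left.2 fun _ hx hx' => not_lt.2 hx hx'.1
  rw [← Iic_union_Ioo_eq_Iio hst, preimage_union]
  refine hμ.additive _ _ (Or.inr (isClosed_Iic.preimage ha)) (Or.inl (isOpen_Ioo.preimage ha))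
    ?_ (hd.preimage a)
  rw [← preimage_union, Iic_union_Ioo_eq_Iio hst]
  exact Or.inl (isOpen_Iio.preimage ha)

theorem antitone_apply_preimage_Ioi (hμ : IsQuasiMeasure μ) {a : X → ℝ} (ha : Continuous a) :
    Antitone fun u => μ (a ⁻¹' Ioi u) := fun _ _ huv =>
  hμ.apply_mono_of_isOpen (isOpen_Ioi.preimage ha) (isOpen_Ioi.preimage ha)
    (preimage_mono (Ioi_subset_Ioi huv))

theorem apply_preimage_Ioi_mono (hμ : IsQuasiMeasure μ) {a b : X → ℝ} (ha : Continuous a)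
    (hb : Continuous b) (hab : a ≤ b) (u : ℝ) : μ (a ⁻¹' Ioi u) ≤ μ (b ⁻¹' Ioi u) :=
  hμ.apply_mono_of_isOpen (isOpen_Ioi.preimage ha) (isOpen_Ioi.preimage hb)
    fun x (hx : u < a x) => hx.trans_le (hab x)

variable [T2Space X]

theorem apply_mono (hμ : IsQuasiMeasure μ) {A B : Set X} (hA : IsImage A)
    (hB : IsImage B) (h : A ⊆ B) : μ A ≤ μ B := by
  rcases hA with hA | hA <;> rcases hB with hB | hB
  · exact hμ.apply_mono_of_isOpen hA hB h
  · refine (hμ.regular A hA).2 ?_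
    rintro _ ⟨K, hK, hKA, rfl⟩
    exact hμ.apply_mono_of_isClosed hK.isClosed hB (hKA.trans h)
  · exact hμ.apply_mono_of_isClosed_of_isOpen hA hB h
  · exact hμ.apply_mono_of_isClosed hA hB h

theorem exists_lt_apply_of_lt_apply_iUnion (hμ : IsQuasiMeasure μ) {ι : Type*}
    [Preorder ι] [IsDirected ι (· ≤ ·)] [Nonempty ι] {U : ι → Set X} (hU : ∀ i, IsOpen (U i))
    (hmono : Monotone U) {c : ℝ} (hc : c < μ (⋃ i, U i)) : ∃ i, c < μ (U i) := by
  obtain ⟨_, ⟨K, hK, hKU, rfl⟩, hcK, -⟩ := (hμ.regular _ (isOpen_iUnion hU)).exists_between hc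
  obtain ⟨i, hKi⟩ := hK.elim_directed_cover U hU hKU hmono.directed_le
  exact ⟨i, hcK.trans_le (hμ.apply_mono_of_isClosed_of_isOpen hK.isClosed (hU i) hKi)⟩

theorem tendsto_apply_iUnion (hμ : IsQuasiMeasure μ) {ι : Type*}
    [Preorder ι] [IsDirected ι (· ≤ ·)] [Nonempty ι] {U : ι → Set X} (hU : ∀ i, IsOpen (U i))
    (hmono : Monotone U) : Tendsto (fun i => μ (U i)) atTop (𝓝 (μ (⋃ i, U i))) := by
  refine tendsto_order.2 ⟨fun c hc => ?_, fun c hc => Eventually.of_forall fun i => ?_⟩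
  · obtain ⟨i, hi⟩ := hμ.exists_lt_apply_of_lt_apply_iUnion hU hmono hc
    filter_upwards [eventually_ge_atTop i] with j hj
    exact hi.trans_le (hμ.apply_mono_of_isOpen (hU i) (hU j) (hmono hj))
  · exact (hμ.apply_mono_of_isOpen (hU i) (isOpen_iUnion hU) (subset_iUnion U i)).trans_lt hc

theorem exists_lt_apply_preimage_Ioi (hμ : IsQuasiMeasure μ) {a : X → ℝ} (ha : Continuous a)
    {x c : ℝ} (hc : c < μ (a ⁻¹' Ioi x)) : ∃ t, x < t ∧ c < μ (a ⁻¹' Ioi t) := by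
  have : Nonempty {t // x < t}ᵒᵈ := ⟨OrderDual.toDual ⟨x + 1, lt_add_one x⟩⟩
  have hU : (⋃ t : {t // x < t}ᵒᵈ, a ⁻¹' Ioi (OrderDual.ofDual t).1) = a ⁻¹' Ioi x := by
    refine Subset.antisymm (iUnion_subset fun t => preimage_mono (Ioi_subset_Ioi t.2.le))
      fun y hy => ?_
    obtain ⟨t, hxt, hty⟩ := exists_between (mem_preimage.1 hy)
    exact mem_iUnion.2 ⟨OrderDual.toDual ⟨t, hxt⟩, hty⟩
  rw [← hU] at hc
  obtain ⟨t, ht⟩ := hμ.exists_lt_apply_of_lt_apply_iUnion (fun t => isOpen_Ioi.preimage ha)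
    (fun s t hst => preimage_mono (Ioi_subset_Ioi hst)) hc
  exact ⟨_, (OrderDual.ofDual t).2, ht⟩

theorem exists_lt_apply_preimage_Iio (hμ : IsQuasiMeasure μ) {a : X → ℝ} (ha : Continuous a)
    {x c : ℝ} (hc : c < μ (a ⁻¹' Iio x)) : ∃ t < x, c < μ (a ⁻¹' Iio t) := by
  have : Nonempty {t // t < x} := ⟨⟨x - 1, sub_one_lt x⟩⟩
  have hU : (⋃ t : {t // t < x}, a ⁻¹' Iio t.1) = a ⁻¹' Iio x := by
    refine Subset.antisymm (iUnion_subset fun t => preimage_mono (Iio_subset_Iio t.2.le))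
      fun y hy => ?_
    obtain ⟨t, hyt, htx⟩ := exists_between (show a y < x from hy)
    exact mem_iUnion.2 ⟨⟨t, htx⟩, hyt⟩
  rw [← hU] at hc
  obtain ⟨t, ht⟩ := hμ.exists_lt_apply_of_lt_apply_iUnion
    (U := fun t : {t // t < x} => a ⁻¹' Iio t.1) (fun t => isOpen_Iio.preimage ha)
    (fun s t hst => preimage_mono (Iio_subset_Iio hst)) hc
  exact ⟨_, t.2, ht⟩

noncomputable def distribFun (hμ : IsQuasiMeasure μ) (a : X →ᵇ ℝ) : StieltjesFunction ℝ where
  toFun t := μ (a ⁻¹' Iic t)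
  mono' s t hst := hμ.apply_mono_of_isClosed (isClosed_Iic.preimage a.continuous)
    (isClosed_Iic.preimage a.continuous) (preimage_mono (Iic_subset_Iic.2 hst))
  right_continuous' x := by
    refine tendsto_order.2 ⟨fun c hc => ?_, fun c hc => ?_⟩
    · filter_upwards [self_mem_nhdsWithin] with t ht
      exact hc.trans_le (hμ.apply_mono_of_isClosed (isClosed_Iic.preimage a.continuous)
        (isClosed_Iic.preimage a.continuous) (preimage_mono (Iic_subset_Iic.2 ht)))
    · have hx := hμ.apply_preimage_Iic_add_apply_preimage_Ioi a.continuous x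
      obtain ⟨t₀, hxt₀, ht₀⟩ :=
        hμ.exists_lt_apply_preimage_Ioi a.continuous (c := 1 - c) (by linarith)
      filter_upwards [Ico_mem_nhdsGE hxt₀] with t ht
      have hmono := hμ.apply_mono_of_isOpen (isOpen_Ioi.preimage a.continuous)
        (isOpen_Ioi.preimage a.continuous) (preimage_mono (Ioi_subset_Ioi ht.2.le))
      linarith [hμ.apply_preimage_Iic_add_apply_preimage_Ioi a.continuous t]

theorem distribFun_apply (hμ : IsQuasiMeasure μ) (a : X →ᵇ ℝ) (t : ℝ) :
    hμ.distribFun a t = μ (a ⁻¹' Iic t) := rfl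

theorem leftLim_distribFun (hμ : IsQuasiMeasure μ) (a : X →ᵇ ℝ) (t : ℝ) :
    Function.leftLim (hμ.distribFun a) t = μ (a ⁻¹' Iio t) := by
  refine leftLim_eq_of_tendsto (tendsto_order.2 ⟨fun c hc => ?_, fun c hc => ?_⟩)
  · obtain ⟨t₀, ht₀, hc₀⟩ := hμ.exists_lt_apply_preimage_Iio a.continuous hc
    filter_upwards [Ioo_mem_nhdsLT ht₀] with s hs
    exact hc₀.trans_le (hμ.apply_mono (Or.inl (isOpen_Iio.preimage a.continuous))
      (Or.inr (isClosed_Iic.preimage a.continuous)) (preimage_mono (Iio_subset_Iic hs.1.le)))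
  · filter_upwards [self_mem_nhdsWithin] with s hs
    exact (hμ.apply_mono_of_isClosed_of_isOpen (isClosed_Iic.preimage a.continuous)
      (isOpen_Iio.preimage a.continuous) (preimage_mono (Iic_subset_Iio.2 hs))).trans_lt hc

noncomputable def distribMeasure (hμ : IsQuasiMeasure μ) (a : X →ᵇ ℝ) : Measure ℝ :=
  (hμ.distribFun a).measure

instance (hμ : IsQuasiMeasure μ) (a : X →ᵇ ℝ) : IsProbabilityMeasure (hμ.distribMeasure a) := by
  constructor
  have hbot : Tendsto (hμ.distribFun a) atBot (𝓝 0) := tendsto_const_nhds.congr' <| by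
    filter_upwards [eventually_lt_atBot (-‖a‖)] with t ht
    rw [distribFun_apply, preimage_Iic_eq_empty a ht, hμ.apply_empty]
  have htop : Tendsto (hμ.distribFun a) atTop (𝓝 1) := tendsto_const_nhds.congr' <| by
    filter_upwards [eventually_ge_atTop ‖a‖] with t ht
    rw [distribFun_apply, preimage_Iic_eq_univ a ht, hμ.normalized]
  rw [distribMeasure, StieltjesFunction.measure_univ _ hbot htop, sub_zero, ENNReal.ofReal_one]

theorem distribMeasure_Ioo (hμ : IsQuasiMeasure μ) (a : X →ᵇ ℝ) (s t : ℝ) :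
    hμ.distribMeasure a (Ioo s t) = ENNReal.ofReal (μ (a ⁻¹' Ioo s t)) := by
  rcases le_or_gt t s with hts | hst
  · simp [Ioo_eq_empty (not_lt.2 hts), hμ.apply_empty]
  · rw [distribMeasure, StieltjesFunction.measure_Ioo, leftLim_distribFun, distribFun_apply,
      hμ.apply_preimage_Iio_eq_add a.continuous hst, add_sub_cancel_left]

theorem exists_isOpen_between_distribMeasure_eq (hμ : IsQuasiMeasure μ) (a : X →ᵇ ℝ)
    {K U : Set ℝ} (hK : IsCompact K) (hU : IsOpen U) (hKU : K ⊆ U) :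
    ∃ V, IsOpen V ∧ K ⊆ V ∧ V ⊆ U ∧
      hμ.distribMeasure a V = ENNReal.ofReal (μ (a ⁻¹' V)) := by
  obtain ⟨S, hS, hd, hKS, hSU⟩ := hK.exists_finset_Ioo_between hU hKU
  have hIoo : ∀ V ∈ S, IsOpen V ∧ hμ.distribMeasure a V = ENNReal.ofReal (μ (a ⁻¹' V)) := by
    intro V hV
    obtain ⟨p, q, rfl⟩ := hS V hV
    exact ⟨isOpen_Ioo, hμ.distribMeasure_Ioo a p q⟩
  refine ⟨⋃₀ S, isOpen_sUnion fun V hV => (hIoo V hV).1, hKS, hSU, ?_⟩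
  rw [sUnion_eq_biUnion, Finset.set_biUnion_coe, measure_biUnion_finset (f := fun V => V) hd
    fun V hV => (hIoo V hV).1.measurableSet, preimage_iUnion₂,
    hμ.apply_biUnion_finset (V := fun V => a ⁻¹' V) (fun V hV W hW h => (hd hV hW h).preimage a)
      fun V hV => (hIoo V hV).1.preimage a.continuous,
    ENNReal.ofReal_sum_of_nonneg fun V hV => hμ.nonneg _ (Or.inl ((hIoo V hV).1.preimage
      a.continuous))]
  exact Finset.sum_congr rfl fun V hV => (hIoo V hV).2

/-- Both sides are inner regular, and every compact subset of `U` lies in a finite disjoint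
union of open intervals inside `U`, on which the two sides agree by additivity. -/
theorem distribMeasure_of_isOpen (hμ : IsQuasiMeasure μ) (a : X →ᵇ ℝ) {U : Set ℝ}
    (hU : IsOpen U) : hμ.distribMeasure a U = ENNReal.ofReal (μ (a ⁻¹' U)) := by
  have hUa : IsOpen (a ⁻¹' U) := hU.preimage a.continuous
  apply le_antisymm
  · refine le_of_forall_lt fun r hr => ?_
    obtain ⟨K, hKU, hK, hrK⟩ := hU.exists_lt_isCompact hr
    obtain ⟨V, hV, hKV, hVU, hνV⟩ := hμ.exists_isOpen_between_distribMeasure_eq a hK hU hKU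
    calc r < hμ.distribMeasure a K := hrK
      _ ≤ hμ.distribMeasure a V := measure_mono hKV
      _ = ENNReal.ofReal (μ (a ⁻¹' V)) := hνV
      _ ≤ ENNReal.ofReal (μ (a ⁻¹' U)) := ENNReal.ofReal_le_ofReal <|
        hμ.apply_mono_of_isOpen (hV.preimage a.continuous) hUa (preimage_mono hVU)
  · rw [ENNReal.ofReal_le_iff_le_toReal (measure_ne_top _ _)]
    refine (hμ.regular _ hUa).2 ?_
    rintro _ ⟨L, hL, hLU, rfl⟩
    obtain ⟨V, hV, hLV, hVU, hνV⟩ := hμ.exists_isOpen_between_distribMeasure_eq a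
      (hL.image a.continuous) hU (image_subset_iff.2 hLU)
    calc μ L ≤ μ (a ⁻¹' V) := hμ.apply_mono_of_isClosed_of_isOpen hL.isClosed
          (hV.preimage a.continuous) (image_subset_iff.1 hLV)
      _ = (hμ.distribMeasure a V).toReal := by
        rw [hνV, ENNReal.toReal_ofReal (hμ.nonneg _ (Or.inl (hV.preimage a.continuous)))]
      _ ≤ (hμ.distribMeasure a U).toReal :=
        ENNReal.toReal_mono (measure_ne_top _ _) (measure_mono hVU)

theorem distribMeasure_of_isImage (hμ : IsQuasiMeasure μ) (a : X →ᵇ ℝ) {A : Set ℝ}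
    (hA : IsImage A) : hμ.distribMeasure a A = ENNReal.ofReal (μ (a ⁻¹' A)) := by
  rcases hA with hA | hA
  · exact hμ.distribMeasure_of_isOpen a hA
  have hν := measure_add_measure_compl (μ := hμ.distribMeasure a) hA.measurableSet
  have hμA := hμ.apply_add_apply_compl (Or.inr (hA.preimage a.continuous))
  rw [measure_univ, hμ.distribMeasure_of_isOpen a hA.isOpen_compl, preimage_compl,
    ← ENNReal.ofReal_one, ← hμA, ENNReal.ofReal_add (hμ.nonneg _ (Or.inr (hA.preimage
    a.continuous))) (hμ.nonneg _ (Or.inl (hA.preimage a.continuous).isOpen_compl))] at hν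
  exact (ENNReal.add_left_inj ENNReal.ofReal_ne_top).1 hν

theorem exists_distribution (hμ : IsQuasiMeasure μ) (a : X →ᵇ ℝ) :
    ∃ ν : Measure ℝ, IsProbabilityMeasure ν ∧
      ∀ A : Set ℝ, IsImage A → ν A = ENNReal.ofReal (μ (a ⁻¹' A)) :=
  ⟨hμ.distribMeasure a, inferInstance, fun _ hA => hμ.distribMeasure_of_isImage a hA⟩

theorem qint_eq (hμ : IsQuasiMeasure μ) (a : X →ᵇ ℝ) {M : ℝ} (hM : ‖a‖ ≤ M) :
    qint μ a = (∫ u in -M..M, μ (a ⁻¹' Ioi u)) - M := by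
  have hex := hμ.exists_distribution a
  obtain ⟨hprob, hν⟩ := hex.choose_spec
  have hsupp : ∀ᵐ t ∂hex.choose, t ∈ Icc (-M) M := by
    have : a ⁻¹' (Icc (-M) M)ᶜ = ∅ := eq_empty_of_forall_notMem fun x hx =>
      hx ⟨(neg_le_neg hM).trans (a.neg_norm_le_apply x), (a.apply_le_norm x).trans hM⟩
    rw [ae_iff, ← ENNReal.ofReal_zero, ← hμ.apply_empty, ← this]
    exact hν _ (Or.inl isClosed_Icc.isOpen_compl)
  rw [qint, dif_pos hex, integral_id_eq_intervalIntegral_measureReal_Ioi hsupp]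
  congr 2 with u
  rw [measureReal_def, hν _ (Or.inl isOpen_Ioi),
    ENNReal.toReal_ofReal (hμ.nonneg _ (Or.inl (isOpen_Ioi.preimage a.continuous)))]

theorem qint_mono (hμ : IsQuasiMeasure μ) {a b : X →ᵇ ℝ} (hab : a ≤ b) :
    qint μ a ≤ qint μ b := by
  set M := max ‖a‖ ‖b‖
  have hM : -M ≤ M := neg_le_self ((norm_nonneg a).trans (le_max_left _ _))
  rw [hμ.qint_eq a (le_max_left _ _), hμ.qint_eq b (le_max_right _ _), sub_le_sub_iff_right]
  exact intervalIntegral.integral_mono_on hM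
    (hμ.antitone_apply_preimage_Ioi a.continuous).intervalIntegrable
    (hμ.antitone_apply_preimage_Ioi b.continuous).intervalIntegrable
    fun u _ => hμ.apply_preimage_Ioi_mono a.continuous b.continuous hab u

theorem tendsto_apply_preimage_Ioi (hμ : IsQuasiMeasure μ) {ι : Type*} [Preorder ι]
    [IsDirected ι (· ≤ ·)] [Nonempty ι] {a : ι → X → ℝ} {f : X → ℝ} (ha : ∀ i, Continuous (a i))
    (hmono : Monotone a) (hle : ∀ i, a i ≤ f)
    (hlim : ∀ x, Tendsto (fun i => a i x) atTop (𝓝 (f x))) (u : ℝ) :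
    Tendsto (fun i => μ (a i ⁻¹' Ioi u)) atTop (𝓝 (μ (f ⁻¹' Ioi u))) := by
  have hU : ⋃ i, a i ⁻¹' Ioi u = f ⁻¹' Ioi u := by
    refine Subset.antisymm (iUnion_subset fun i x hx => lt_of_lt_of_le hx (hle i x))
      fun x hx => mem_iUnion.2 ((hlim x).eventually (eventually_gt_nhds hx)).exists
  rw [← hU]
  exact hμ.tendsto_apply_iUnion (fun i => isOpen_Ioi.preimage (ha i))
    fun i j hij x (hx : u < a i x) => hx.trans_le (hmono hij x)

end IsQuasiMeasure

/-- monotone convergence for quasi-integrals along increasing nets. -/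
theorem quasiIntegral_monotone_convergence {X : Type*} [TopologicalSpace X] [T2Space X]
    {ι : Type*} [Preorder ι] [IsDirected ι (· ≤ ·)] [Nonempty ι]
    (μ : Set X → ℝ) (hμ : IsQuasiMeasure μ)
    (a : ι → (X →ᵇ ℝ)) (f : X →ᵇ ℝ) (hmono : Monotone a)
    (hle : ∀ i, a i ≤ f)
    (hlim : ∀ x, Filter.Tendsto (fun i => a i x) Filter.atTop (nhds (f x))) :
    Monotone (fun i => qint μ (a i)) ∧
      Filter.Tendsto (fun i => qint μ (a i)) Filter.atTop (nhds (qint μ f)) := by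
  refine ⟨fun i j hij => hμ.qint_mono (hmono hij), ?_⟩
  obtain ⟨i₀⟩ := ‹Nonempty ι›
  set M := max ‖a i₀‖ ‖f‖
  have hMf : ‖f‖ ≤ M := le_max_right _ _
  have hM : ∀ i, i₀ ≤ i → ‖a i‖ ≤ M := fun i hi =>
    (norm_le ((norm_nonneg f).trans hMf)).2 fun x =>
      (abs_le_max_abs_abs (hmono hi x) (hle i x)).trans
        (max_le_max ((a i₀).norm_coe_le_norm x) (f.norm_coe_le_norm x))
  have hintegrals := tendsto_intervalIntegral_of_antitoneOn
    (neg_le_self ((norm_nonneg f).trans hMf))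
    (fun i => (hμ.antitone_apply_preimage_Ioi (a i).continuous).antitoneOn _)
    ((hμ.antitone_apply_preimage_Ioi f.continuous).antitoneOn _)
    fun u _ => hμ.tendsto_apply_preimage_Ioi (fun i => (a i).continuous)
      (fun i j hij => hmono hij) hle hlim u
  rw [hμ.qint_eq f hMf]
  refine (hintegrals.sub_const M).congr' ?_
  filter_upwards [eventually_ge_atTop i₀] with i hi
  exact (hμ.qint_eq (a i) (hM i hi)).symm
end

section
/- Change of variables for image-transformations: if q is an image-transformation from a locally compact Hausdorff space X to a Hausdorff space Y, μ a quasi-measure on Y, and a ∈ C_b(X), then (q*μ)(a) = μ(q(a)), where q*μ = μ ∘ q, q(a)(y) = (q*δ_y)(a), and both sides are quasi-integrals. -/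
/-!
For fixed `y`, the set function `A ↦ [y ∈ q (a⁻¹ A)]` on `ℝ` is `δ_y` composed with the
image-transformation `q ∘ a⁻¹ : ℝ → Y`. Such a simple quasi-measure on `ℝ` is the point mass at
the threshold `t = inf {s | y ∈ q (a⁻¹ (-∞, s))}`: an open set around `t` splits `(-∞, t + ε)`
into a closed part missed by `y` and an open part, and regularity turns `y ∈ q (a⁻¹ U)` into
`y ∈ q (a⁻¹ L)` for a compact `L ⊆ U`, which is disjoint from `q (a⁻¹ Lᶜ) ∋ y` unless `t ∈ L`.
So `t = q(a)(y)`, hence `q (a⁻¹ A) = q(a)⁻¹ A` for every image `A`, and both sides of the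
change of variables are quasi-integrals of the same set function on `ℝ`.
-/
open Set MeasureTheory BoundedContinuousFunction Filter Topology

-- The function `q(a) : Y → ℝ`, `q(a)(y) = (q*δ_y)(a)`, the quasi-integral of `a` with
-- respect to the pulled-back simple quasi-measure `δ_y ∘ q`.
open Classical in
noncomputable def qmap {X Y : Type*} [TopologicalSpace X] [TopologicalSpace Y]
    (q : Set X → Set Y) (a : X →ᵇ ℝ) (y : Y) : ℝ :=
  qint (fun A : Set X => if y ∈ q A then (1 : ℝ) else 0) a

lemma IsImage.preimage {X Z : Type*} [TopologicalSpace X] [TopologicalSpace Z] {f : X → Z}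
    (hf : Continuous f) {A : Set Z} (hA : IsImage A) : IsImage (f ⁻¹' A) :=
  hA.imp (·.preimage hf) (·.preimage hf)

namespace IsImageTransformation

variable {X Y : Type*} [TopologicalSpace X] [TopologicalSpace Y] {q : Set X → Set Y}

lemma map_empty (hq : IsImageTransformation q) : q ∅ = ∅ := by
  have h := hq.additive ∅ ∅ (.inl isOpen_empty) (.inl isOpen_empty)
    (by rw [union_empty]; exact .inl isOpen_empty) disjoint_bot_left
  exact disjoint_self.mp h.2

lemma map_compl_of_isClosed (hq : IsImageTransformation q) {C : Set X} (hC : IsClosed C) :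
    q Cᶜ = (q C)ᶜ := by
  have h := hq.additive C Cᶜ (.inr hC) (.inl hC.isOpen_compl)
    (by rw [union_compl_self]; exact .inl isOpen_univ) disjoint_compl_right
  rw [union_compl_self, hq.top] at h
  exact (isCompl_iff.mpr ⟨h.2, codisjoint_iff.mpr h.1.symm⟩).compl_eq.symm

lemma map_mono_of_isClosed_of_isOpen (hq : IsImageTransformation q) {C V : Set X}
    (hC : IsClosed C) (hV : IsOpen V) (hCV : C ⊆ V) : q C ⊆ q V := by
  have hV' : C ∪ V \ C = V := union_sdiff_cancel hCV
  have h := hq.additive C (V \ C) (.inr hC) (.inl (hV.sdiff hC))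
    (by rw [hV']; exact .inl hV) disjoint_sdiff_self_right
  rw [← hV', h.1]
  exact subset_union_left

lemma map_mono_of_isOpen [T2Space X] (hq : IsImageTransformation q) {U V : Set X}
    (hU : IsOpen U) (hV : IsOpen V) (hUV : U ⊆ V) : q U ⊆ q V := by
  intro y hy
  obtain ⟨L, hL, hLU, hyL⟩ :=
    hq.regular U hU {y} isCompact_singleton (singleton_subset_iff.mpr hy)
  exact hq.map_mono_of_isClosed_of_isOpen hL.isClosed hV (hLU.trans hUV) (hyL rfl)

lemma map_mono_of_isClosed [T2Space X] (hq : IsImageTransformation q) {C D : Set X}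
    (hC : IsClosed C) (hD : IsClosed D) (hCD : C ⊆ D) : q C ⊆ q D := by
  have h := hq.map_mono_of_isOpen hD.isOpen_compl hC.isOpen_compl (compl_subset_compl.mpr hCD)
  rwa [hq.map_compl_of_isClosed hC, hq.map_compl_of_isClosed hD, compl_subset_compl] at h

lemma comp_preimage [T2Space X] {Z : Type*} [TopologicalSpace Z] [T2Space Z]
    (hq : IsImageTransformation q) {f : X → Z} (hf : Continuous f) :
    IsImageTransformation fun A : Set Z => q (f ⁻¹' A) where
  image A hA := hq.image _ (hA.preimage hf)
  top := by rw [preimage_univ, hq.top]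
  openMap U hU := hq.openMap _ (hU.preimage hf)
  additive A B hA hB hAB hdisj := by
    rw [preimage_union]
    exact hq.additive _ _ (hA.preimage hf) (hB.preimage hf)
      (by rw [← preimage_union]; exact hAB.preimage hf) (hdisj.preimage f)
  regular U hU K hK hKU := by
    obtain ⟨L, hL, hLU, hKL⟩ := hq.regular _ (hU.preimage hf) K hK hKU
    have hfL : IsCompact (f '' L) := hL.image hf
    refine ⟨f '' L, hfL, image_subset_iff.mpr hLU, hKL.trans ?_⟩
    exact hq.map_mono_of_isClosed hL.isClosed (hfL.isClosed.preimage hf)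
      (subset_preimage_image f L)

end IsImageTransformation

lemma exists_forall_lt_not_forall_gt_of_monotone {P : ℝ → Prop} (hP : Monotone P) {m M : ℝ}
    (hm : ¬ P m) (hM : P M) : ∃ t, (∀ s < t, ¬ P s) ∧ ∀ s > t, P s := by
  have hbdd : BddBelow {s | P s} := ⟨m, fun s hs => not_lt.mp fun hsm => hm (hP hsm.le hs)⟩
  refine ⟨sInf {s | P s}, fun s hs hPs => (csInf_le hbdd hPs).not_gt hs, fun s hs => ?_⟩
  obtain ⟨s', hPs', hs'⟩ := exists_lt_of_csInf_lt ⟨M, hM⟩ hs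
  exact hP hs'.le hPs'

namespace IsImageTransformation

variable {Y : Type*} [TopologicalSpace Y] {p : Set ℝ → Set Y} {y : Y}

lemma mem_map_of_mem_isOpen (hp : IsImageTransformation p) {t : ℝ}
    (hlt : ∀ s < t, y ∉ p (Iio s)) (hgt : ∀ s > t, y ∈ p (Iio s))
    {U : Set ℝ} (hU : IsOpen U) (htU : t ∈ U) : y ∈ p U := by
  obtain ⟨ε, hε, hball⟩ := Metric.isOpen_iff.mp hU t htU
  rw [Real.ball_eq_Ioo] at hball
  have hsplit : Iic (t - ε) ∪ Ioo (t - ε) (t + ε) = Iio (t + ε) :=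
    Iic_union_Ioo_eq_Iio (by linarith)
  have hadd := hp.additive (Iic (t - ε)) (Ioo (t - ε) (t + ε)) (.inr isClosed_Iic)
    (.inl isOpen_Ioo) (hsplit ▸ .inl isOpen_Iio)
    ((Iic_disjoint_Ioi le_rfl).mono_right Ioo_subset_Ioi_self)
  have hy : y ∈ p (Iic (t - ε)) ∪ p (Ioo (t - ε) (t + ε)) := by
    rw [← hadd.1, hsplit]
    exact hgt _ (by linarith)
  rcases hy with hy | hy
  · exact absurd (hp.map_mono_of_isClosed_of_isOpen isClosed_Iic isOpen_Iio
      (Iic_subset_Iio.mpr (by linarith : t - ε < t - ε / 2)) hy) (hlt _ (by linarith))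
  · exact hp.map_mono_of_isOpen isOpen_Ioo hU hball hy

/-- For an image-transformation `p` from `ℝ`, the simple quasi-measure `A ↦ [y ∈ p A]` is a
point mass, provided it is not concentrated at `±∞`. -/
lemma exists_forall_isImage_mem_iff (hp : IsImageTransformation p) {m M : ℝ}
    (hm : y ∉ p (Iio m)) (hM : y ∈ p (Iio M)) :
    ∃ t, ∀ A, IsImage A → (t ∈ A ↔ y ∈ p A) := by
  have hmono : Monotone fun s => y ∈ p (Iio s) := fun _ _ hss' hy =>
    hp.map_mono_of_isOpen isOpen_Iio isOpen_Iio (Iio_subset_Iio hss') hy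
  obtain ⟨t, hlt, hgt⟩ := exists_forall_lt_not_forall_gt_of_monotone hmono hm hM
  have hopen : ∀ U, IsOpen U → (t ∈ U ↔ y ∈ p U) := by
    refine fun U hU => ⟨hp.mem_map_of_mem_isOpen hlt hgt hU, fun hyU => by_contra fun htU => ?_⟩
    obtain ⟨L, hL, hLU, hyL⟩ := hp.regular U hU {y} isCompact_singleton
      (singleton_subset_iff.mpr hyU)
    have hy : y ∈ p Lᶜ :=
      hp.mem_map_of_mem_isOpen hlt hgt hL.isClosed.isOpen_compl fun htL => htU (hLU htL)
    exact (hp.map_compl_of_isClosed hL.isClosed ▸ hy) (hyL rfl)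
  refine ⟨t, ?_⟩
  rintro A (hA | hA)
  · exact hopen A hA
  · simpa [hp.map_compl_of_isClosed hA] using (hopen Aᶜ hA.isOpen_compl).not

end IsImageTransformation

lemma qint_eq_integral {X : Type*} [TopologicalSpace X] {μ : Set X → ℝ} {a : X →ᵇ ℝ}
    (ν : Measure ℝ) [IsProbabilityMeasure ν]
    (hν : ∀ A : Set ℝ, IsImage A → ν A = ENNReal.ofReal (μ (a ⁻¹' A))) :
    qint μ a = ∫ t, t ∂ν := by
  have hex : ∃ ν : Measure ℝ, IsProbabilityMeasure ν ∧
      ∀ A : Set ℝ, IsImage A → ν A = ENNReal.ofReal (μ (a ⁻¹' A)) := ⟨ν, inferInstance, hν⟩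
  have : IsProbabilityMeasure hex.choose := hex.choose_spec.1
  have hchoose : hex.choose = ν := Measure.ext_of_Iic _ _ fun s => by
    rw [hex.choose_spec.2 _ (.inr isClosed_Iic), hν _ (.inr isClosed_Iic)]
  rw [qint, dif_pos hex, hchoose]

lemma qint_congr {X Y : Type*} [TopologicalSpace X] [TopologicalSpace Y] {μ : Set X → ℝ}
    {ν : Set Y → ℝ} {a : X →ᵇ ℝ} {b : Y →ᵇ ℝ}
    (h : ∀ A : Set ℝ, IsImage A → μ (a ⁻¹' A) = ν (b ⁻¹' A)) : qint μ a = qint ν b := by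
  by_cases hex : ∃ ρ : Measure ℝ, IsProbabilityMeasure ρ ∧
      ∀ A : Set ℝ, IsImage A → ρ A = ENNReal.ofReal (μ (a ⁻¹' A))
  · obtain ⟨ρ, _, hρ⟩ := hex
    rw [qint_eq_integral ρ hρ, qint_eq_integral ρ fun A hA => by rw [hρ A hA, h A hA]]
  · have hex' : ¬ ∃ ρ : Measure ℝ, IsProbabilityMeasure ρ ∧
        ∀ A : Set ℝ, IsImage A → ρ A = ENNReal.ofReal (ν (b ⁻¹' A)) := fun ⟨ρ, hρ, hρA⟩ =>
      hex ⟨ρ, hρ, fun A hA => by rw [hρA A hA, h A hA]⟩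
    rw [qint, qint, dif_neg hex, dif_neg hex']

section qmap

variable {X Y : Type*} [TopologicalSpace X] [TopologicalSpace Y] {q : Set X → Set Y}

lemma qmap_eq_of_forall_isImage_mem_iff {a : X →ᵇ ℝ} {y : Y} {t : ℝ}
    (ht : ∀ A, IsImage A → (t ∈ A ↔ y ∈ q (a ⁻¹' A))) : qmap q a y = t := by
  rw [qmap, qint_eq_integral (Measure.dirac t) fun A hA => ?_, integral_dirac]
  by_cases htA : t ∈ A
  · simp [htA, (ht A hA).mp htA]
  · simp [htA, mt (ht A hA).mpr htA]

lemma qmap_mem_iff [T2Space X] (hq : IsImageTransformation q) (a : X →ᵇ ℝ) (y : Y) {A : Set ℝ}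
    (hA : IsImage A) : qmap q a y ∈ A ↔ y ∈ q (a ⁻¹' A) := by
  have hm : y ∉ q (a ⁻¹' Iio (-‖a‖)) := by
    have hempty : a ⁻¹' Iio (-‖a‖) = ∅ :=
      eq_empty_of_forall_notMem fun x hx => (a.neg_norm_le_apply x).not_gt hx
    rw [hempty, hq.map_empty]
    exact notMem_empty y
  have hM : y ∈ q (a ⁻¹' Iio (‖a‖ + 1)) := by
    have huniv : a ⁻¹' Iio (‖a‖ + 1) = univ :=
      eq_univ_of_forall fun x => (a.apply_le_norm x).trans_lt (lt_add_one _)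
    rw [huniv, hq.top]
    exact mem_univ y
  obtain ⟨t, ht⟩ := (hq.comp_preimage a.continuous).exists_forall_isImage_mem_iff hm hM
  rw [qmap_eq_of_forall_isImage_mem_iff ht, ht A hA]

end qmap

theorem imageTransformation_change_of_variables_general {X Y : Type*} [TopologicalSpace X]
    [T2Space X] [TopologicalSpace Y]
    (q : Set X → Set Y) (hq : IsImageTransformation q)
    (μ : Set Y → ℝ) (a : X →ᵇ ℝ)
    (b : Y →ᵇ ℝ) (hb : ∀ y, b y = qmap q a y) :
    qint (fun A : Set X => μ (q A)) a = qint μ b := by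
  have hpre : ∀ A : Set ℝ, IsImage A → q (a ⁻¹' A) = b ⁻¹' A := fun A hA => by
    ext y
    rw [mem_preimage, hb, qmap_mem_iff hq a y hA]
  exact qint_congr fun A hA => by rw [hpre A hA]

/-- change of variables for image-transformations: `(q*μ)(a) = μ(q(a))`. -/
theorem imageTransformation_change_of_variables {X Y : Type*} [TopologicalSpace X]
    [T2Space X] [LocallyCompactSpace X] [TopologicalSpace Y] [T2Space Y]
    (q : Set X → Set Y) (hq : IsImageTransformation q)
    (μ : Set Y → ℝ) (hμ : IsQuasiMeasure μ) (a : X →ᵇ ℝ)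
    (b : Y →ᵇ ℝ) (hb : ∀ y, b y = qmap q a y) :
    qint (fun A : Set X => μ (q A)) a = qint μ b :=
  imageTransformation_change_of_variables_general q hq μ a b hb
end
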